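/- The group presented on three generators a, b, c with relations c² = 1, ac = ca, bc = cb, a⁶ = c, b² = c, and (ba)² = c is isomorphic to the dicyclic group of order 24 (Mathlib's QuaternionGroup 6), which is a semidirect product C₃ ⋊ Q₈ with normal subgroup C₃ generated by a²c and complement Q₈ generated by a³c and b. -/

import Mathlib

/-- Three generators `a`, `b`, `c`. -/
inductive Gen3 | a | b | c

/-- Relators corresponding to the relations
`c² = 1`, `ac = ca`, `bc = cb`, `a⁶ = c`, `b² = c`, `(ba)² = c`. -/
def relsDic6 : Set (FreeGroup Gen3) :=
  { FreeGroup.of Gen3.c ^ 2,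
    FreeGroup.of Gen3.a * FreeGroup.of Gen3.c * (FreeGroup.of Gen3.a)⁻¹ * (FreeGroup.of Gen3.c)⁻¹,
    FreeGroup.of Gen3.b * FreeGroup.of Gen3.c * (FreeGroup.of Gen3.b)⁻¹ * (FreeGroup.of Gen3.c)⁻¹,
    FreeGroup.of Gen3.a ^ 6 * (FreeGroup.of Gen3.c)⁻¹,
    FreeGroup.of Gen3.b ^ 2 * (FreeGroup.of Gen3.c)⁻¹,
    (FreeGroup.of Gen3.b * FreeGroup.of Gen3.a) ^ 2 * (FreeGroup.of Gen3.c)⁻¹ }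

/-- The images of the generators in the presented group. -/
noncomputable def pa : PresentedGroup relsDic6 := PresentedGroup.of Gen3.a
noncomputable def pb : PresentedGroup relsDic6 := PresentedGroup.of Gen3.b
noncomputable def pc : PresentedGroup relsDic6 := PresentedGroup.of Gen3.c

/-! Sending `a ↦ a 1`, `b ↦ xa 0`, `c ↦ a 6` respects the relations, so it defines a map to the
dicyclic group `Dic₆`. Conversely, in the presented group `a¹² = 1`, `b² = a⁶`, and `(ba)² = c = b²`
gives `b a b⁻¹ = a⁻¹`; these are the defining relations of `Dic₆`, which yields the inverse map.
Inside `Dic₆`, `a²c = a⁸` has order `3`, while `a³c = a⁹` has order `4` with `(xa 0)² = a⁶ = (a⁹)²`,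
so `a⁹` and `xa 0` span a copy of `Q₈`. The orders `3` and `8` are coprime, and the two subgroups
together contain `a = a³c (a²c)⁻¹` and `b`, hence everything. -/

theorem pow_zmod_val_add {G : Type*} [Monoid G] {m : ℕ} [NeZero m] {x : G} (hx : x ^ m = 1)
    (i j : ZMod m) : x ^ (i + j).val = x ^ i.val * x ^ j.val := by
  rw [ZMod.val_add, ← pow_eq_pow_mod _ hx, pow_add]

theorem pow_zmod_val_sub {G : Type*} [Group G] {m : ℕ} [NeZero m] {x : G} (hx : x ^ m = 1)
    (i j : ZMod m) : x ^ (j - i).val = (x ^ i.val)⁻¹ * x ^ j.val := by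
  rw [eq_inv_mul_iff_mul_eq, ← pow_zmod_val_add hx, add_sub_cancel]

theorem Subgroup.zpowers_normal_of_conj_mem {G : Type*} [Group G] {x : G}
    (h : ∀ g : G, g * x * g⁻¹ ∈ Subgroup.zpowers x) : (Subgroup.zpowers x).Normal :=
  ⟨by rintro _ ⟨m, rfl⟩ g; simpa only [conj_zpow] using zpow_mem (h g) m⟩

namespace QuaternionGroup

variable {n : ℕ} {G : Type*} [Group G]

def lift [NeZero n] (x y : G) (hx : x ^ (2 * n) = 1) (hy : y ^ 2 = x ^ n)
    (hyx : y * x * y⁻¹ = x⁻¹) : QuaternionGroup n →* G where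
  toFun
    | a i => x ^ i.val
    | xa i => y * x ^ i.val
  map_one' := by
    show x ^ (0 : ZMod (2 * n)).val = 1
    rw [ZMod.val_zero, pow_zero]
  map_mul' := by
    have hxy (k : ℕ) : y * (x ^ k)⁻¹ = x ^ k * y := by
      have hyx' : y * x⁻¹ * y⁻¹ = x := by simpa [mul_assoc] using congrArg (·⁻¹) hyx
      rw [← inv_pow, ← mul_inv_eq_iff_eq_mul, ← conj_pow, hyx']
    have hn : x ^ (n : ZMod (2 * n)).val = y ^ 2 := by
      rw [ZMod.val_natCast, Nat.mod_eq_of_lt (by have := NeZero.pos n; omega), hy]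
    rintro (i | i) (j | j)
    · exact pow_zmod_val_add hx i j
    · show y * x ^ (j - i).val = x ^ i.val * (y * x ^ j.val)
      rw [pow_zmod_val_sub hx, ← mul_assoc, hxy, mul_assoc]
    · show y * x ^ (i + j).val = y * x ^ i.val * (x ^ j.val)
      rw [pow_zmod_val_add hx, mul_assoc]
    · show x ^ (n + j - i : ZMod (2 * n)).val = y * x ^ i.val * (y * x ^ j.val)
      rw [add_sub_assoc, pow_zmod_val_add hx, pow_zmod_val_sub hx, hn, sq, mul_assoc y y,
        ← mul_assoc y (x ^ i.val)⁻¹, hxy]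
      simp only [mul_assoc]

section lift

variable [NeZero n] {x y : G} {hx : x ^ (2 * n) = 1} {hy : y ^ 2 = x ^ n} {hyx : y * x * y⁻¹ = x⁻¹}

@[simp] theorem lift_a (i : ZMod (2 * n)) : lift x y hx hy hyx (a i) = x ^ i.val := rfl
@[simp] theorem lift_xa (i : ZMod (2 * n)) : lift x y hx hy hyx (xa i) = y * x ^ i.val := rfl

@[simp] theorem lift_a_one : lift x y hx hy hyx (a 1) = x := by
  rw [lift_a, ZMod.val_one'' (by have := NeZero.pos n; omega), pow_one]

@[simp] theorem lift_xa_zero : lift x y hx hy hyx (xa 0) = y := by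
  rw [lift_xa, ZMod.val_zero, pow_zero, mul_one]

end lift

theorem closure_a_one_xa_zero [NeZero n] :
    Subgroup.closure {a 1, xa 0} = (⊤ : Subgroup (QuaternionGroup n)) := by
  have ha : a 1 ∈ Subgroup.closure {a 1, (xa 0 : QuaternionGroup n)} :=
    Subgroup.subset_closure (Set.mem_insert _ _)
  have hxa : xa 0 ∈ Subgroup.closure {a 1, (xa 0 : QuaternionGroup n)} :=
    Subgroup.subset_closure (Set.mem_insert_of_mem _ rfl)
  rw [eq_top_iff]
  rintro (i | i) -
  · rw [← ZMod.natCast_zmod_val i, ← a_one_pow]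
    exact pow_mem ha _
  · rw [← zero_add i, ← xa_mul_a, ← ZMod.natCast_zmod_val i, ← a_one_pow]
    exact mul_mem hxa (pow_mem ha _)

theorem zpowers_a_normal (k : ZMod (2 * n)) :
    (Subgroup.zpowers (a k : QuaternionGroup n)).Normal :=
  Subgroup.zpowers_normal_of_conj_mem fun
    | a i => by
      rw [a_mul_a, add_comm, ← a_mul_a, mul_inv_cancel_right]
      exact Subgroup.mem_zpowers _
    | xa i => by
      have hconj : xa i * a k = (a k)⁻¹ * xa i := by
        show xa (i + k) = a (-k) * xa i
        rw [a_mul_xa, sub_neg_eq_add]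
      rw [hconj, mul_inv_cancel_right]
      exact inv_mem (Subgroup.mem_zpowers _)

end QuaternionGroup

namespace Dic6

open QuaternionGroup Subgroup

theorem pc_sq : pc ^ 2 = 1 := by
  show PresentedGroup.mk _ (FreeGroup.of Gen3.c) ^ 2 = 1
  rw [← map_pow]
  exact PresentedGroup.one_of_mem (by simp [relsDic6])

theorem pa_pow_six : pa ^ 6 = pc := by
  show PresentedGroup.mk _ (FreeGroup.of Gen3.a) ^ 6 = PresentedGroup.mk _ (FreeGroup.of Gen3.c)
  rw [← map_pow]
  exact PresentedGroup.mk_eq_mk_of_mul_inv_mem (by simp [relsDic6])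

theorem pb_sq : pb ^ 2 = pc := by
  show PresentedGroup.mk _ (FreeGroup.of Gen3.b) ^ 2 = PresentedGroup.mk _ (FreeGroup.of Gen3.c)
  rw [← map_pow]
  exact PresentedGroup.mk_eq_mk_of_mul_inv_mem (by simp [relsDic6])

theorem pb_mul_pa_sq : (pb * pa) ^ 2 = pc := by
  show (PresentedGroup.mk _ (FreeGroup.of Gen3.b) * PresentedGroup.mk _ (FreeGroup.of Gen3.a)) ^ 2 =
    PresentedGroup.mk _ (FreeGroup.of Gen3.c)
  rw [← map_mul, ← map_pow]
  exact PresentedGroup.mk_eq_mk_of_mul_inv_mem (by simp [relsDic6])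

theorem pa_pow_twelve : pa ^ (2 * 6) = 1 := by
  rw [pow_mul', pa_pow_six, pc_sq]

theorem pb_sq_eq_pa_pow_six : pb ^ 2 = pa ^ 6 := by
  rw [pb_sq, pa_pow_six]

theorem pb_conj_pa : pb * pa * pb⁻¹ = pa⁻¹ := by
  have h := pb_mul_pa_sq
  rw [← pb_sq, sq, sq, mul_assoc, mul_right_inj] at h
  rwa [mul_inv_eq_iff_eq_mul, eq_inv_mul_iff_mul_eq]

def toQuaternionGen : Gen3 → QuaternionGroup 6
  | .a => a 1
  | .b => xa 0
  | .c => a 6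

theorem toQuaternionGen_rels : ∀ r ∈ relsDic6, FreeGroup.lift toQuaternionGen r = 1 := by
  simp only [relsDic6, Set.mem_insert_iff, Set.mem_singleton_iff]
  rintro r (rfl | rfl | rfl | rfl | rfl | rfl) <;>
    simp only [map_mul, map_pow, map_inv, FreeGroup.lift_apply_of, toQuaternionGen] <;> decide

noncomputable def toQuaternion : PresentedGroup relsDic6 →* QuaternionGroup 6 :=
  PresentedGroup.toGroup toQuaternionGen_rels

noncomputable def ofQuaternion : QuaternionGroup 6 →* PresentedGroup relsDic6 :=
  lift pa pb pa_pow_twelve pb_sq_eq_pa_pow_six pb_conj_pa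

@[simp] theorem toQuaternion_pa : toQuaternion pa = a 1 := PresentedGroup.toGroup.of _
@[simp] theorem toQuaternion_pb : toQuaternion pb = xa 0 := PresentedGroup.toGroup.of _
@[simp] theorem toQuaternion_pc : toQuaternion pc = a 6 := PresentedGroup.toGroup.of _

theorem ofQuaternion_a_one : ofQuaternion (a 1) = pa := lift_a_one

theorem ofQuaternion_xa_zero : ofQuaternion (xa 0) = pb := lift_xa_zero

theorem ofQuaternion_comp_toQuaternion : ofQuaternion.comp toQuaternion = .id _ := by
  refine PresentedGroup.ext fun
    | .a => show ofQuaternion (toQuaternion pa) = pa by rw [toQuaternion_pa, ofQuaternion_a_one]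
    | .b => show ofQuaternion (toQuaternion pb) = pb by rw [toQuaternion_pb, ofQuaternion_xa_zero]
    | .c => show ofQuaternion (toQuaternion pc) = pc by
        simp [ofQuaternion, ZMod.val_ofNat, pa_pow_six]

theorem toQuaternion_comp_ofQuaternion : toQuaternion.comp ofQuaternion = .id _ := by
  ext (i | i) <;> simp [ofQuaternion, a_one_pow, xa_mul_a]

noncomputable def mulEquivQuaternion : PresentedGroup relsDic6 ≃* QuaternionGroup 6 :=
  MonoidHom.toMulEquiv _ _ ofQuaternion_comp_toQuaternion toQuaternion_comp_ofQuaternion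

theorem ofQuaternion_injective : Function.Injective ofQuaternion :=
  mulEquivQuaternion.symm.injective

theorem ofQuaternion_a_eight : ofQuaternion (a 8) = pa ^ 2 * pc := by
  simp [ofQuaternion, ZMod.val_ofNat, ← pa_pow_six, ← pow_add]

theorem ofQuaternion_a_nine : ofQuaternion (a 9) = pa ^ 3 * pc := by
  simp [ofQuaternion, ZMod.val_ofNat, ← pa_pow_six, ← pow_add]

theorem closure_pa_sq_mul_pc_normal : (closure {pa ^ 2 * pc}).Normal := by
  rw [← zpowers_eq_closure, ← ofQuaternion_a_eight, ← MonoidHom.map_zpowers]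
  exact (zpowers_a_normal 8).map _ mulEquivQuaternion.symm.surjective

theorem card_closure_pa_sq_mul_pc : Nat.card (closure {pa ^ 2 * pc}) = 3 := by
  rw [← zpowers_eq_closure, Nat.card_zpowers, ← ofQuaternion_a_eight,
    orderOf_injective _ ofQuaternion_injective, orderOf_a]
  rfl

noncomputable def closurePaSqMulPcEquiv : closure {pa ^ 2 * pc} ≃* Multiplicative (ZMod 3) :=
  mulEquivOfPrimeCardEq card_closure_pa_sq_mul_pc (by simp)

def quaternionEmbedding : QuaternionGroup 2 →* QuaternionGroup 6 :=
  lift (a 9) (xa 0) (by decide) (by decide) (by decide)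

theorem quaternionEmbedding_injective : Function.Injective quaternionEmbedding := by
  decide

theorem range_ofQuaternion_comp_quaternionEmbedding :
    (ofQuaternion.comp quaternionEmbedding).range = closure {pa ^ 3 * pc, pb} := by
  rw [MonoidHom.range_eq_map, ← closure_a_one_xa_zero, MonoidHom.map_closure, Set.image_pair]
  simp only [MonoidHom.comp_apply, quaternionEmbedding, lift_a_one, lift_xa_zero,
    ofQuaternion_a_nine, ofQuaternion_xa_zero]

noncomputable def closurePaCubeMulPcPbEquiv :
    closure {pa ^ 3 * pc, pb} ≃* QuaternionGroup 2 :=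
  (MulEquiv.subgroupCongr range_ofQuaternion_comp_quaternionEmbedding.symm).trans
    (MonoidHom.ofInjective (f := ofQuaternion.comp quaternionEmbedding)
      (ofQuaternion_injective.comp quaternionEmbedding_injective)).symm

theorem inf_eq_bot : closure {pa ^ 2 * pc} ⊓ closure {pa ^ 3 * pc, pb} = ⊥ := by
  refine disjoint_iff.mp (disjoint_of_coprime_natCard ?_)
  rw [card_closure_pa_sq_mul_pc, Nat.card_congr closurePaCubeMulPcPbEquiv.toEquiv,
    Nat.card_eq_fintype_card, QuaternionGroup.card]
  decide

theorem sup_eq_top : closure {pa ^ 2 * pc} ⊔ closure {pa ^ 3 * pc, pb} = ⊤ := by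
  set H := closure {pa ^ 2 * pc} ⊔ closure {pa ^ 3 * pc, pb}
  have hC : pa ^ 2 * pc ∈ H := mem_sup_left (subset_closure rfl)
  have hQa : pa ^ 3 * pc ∈ H := mem_sup_right (subset_closure (Set.mem_insert _ _))
  have hQb : pb ∈ H := mem_sup_right (subset_closure (Set.mem_insert_of_mem _ rfl))
  rw [eq_top_iff, ← PresentedGroup.closure_range_of, closure_le, Set.range_subset_iff]
  rintro (_ | _ | _)
  · show pa ∈ H
    convert mul_mem hQa (inv_mem hC) using 1
    group
  · exact hQb
  · show pc ∈ H
    rw [← pb_sq]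
    exact pow_mem hQb 2

end Dic6

/-- The group presented by `⟨a,b,c ∣ c² = [a,c] = [b,c] = 1, a⁶ = b² = (ba)² = c⟩` is
isomorphic to the dicyclic group of order `24` (Mathlib's `QuaternionGroup 6`), which is a
semidirect product `C₃ ⋊ Q₈` with normal subgroup `C₃ = ⟨a²c⟩` and complement
`Q₈ = ⟨a³c, b⟩`. -/
theorem stmt9 :
    Nonempty (PresentedGroup relsDic6 ≃* QuaternionGroup 6) ∧
    (Subgroup.closure {pa ^ 2 * pc}).Normal ∧
    Nonempty ((Subgroup.closure {pa ^ 2 * pc} : Subgroup (PresentedGroup relsDic6)) ≃*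
      Multiplicative (ZMod 3)) ∧
    Nonempty ((Subgroup.closure {pa ^ 3 * pc, pb} : Subgroup (PresentedGroup relsDic6)) ≃*
      QuaternionGroup 2) ∧
    Subgroup.closure {pa ^ 2 * pc} ⊓ Subgroup.closure {pa ^ 3 * pc, pb} = ⊥ ∧
    Subgroup.closure {pa ^ 2 * pc} ⊔ Subgroup.closure {pa ^ 3 * pc, pb} = ⊤ :=
  ⟨⟨Dic6.mulEquivQuaternion⟩, Dic6.closure_pa_sq_mul_pc_normal, ⟨Dic6.closurePaSqMulPcEquiv⟩,
    ⟨Dic6.closurePaCubeMulPcPbEquiv⟩, Dic6.inf_eq_bot, Dic6.sup_eq_top⟩
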